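/- For every integer r ≥ 1: (a) the natural homomorphism G_cd → G_bcd that is the identity on the generators c₁, c₂, d₁, d₂ is injective; (b) the generator b has infinite order in G_bcd; and (c) the cyclic subgroup generated by b in G_bcd intersects the image of G_cd only in the identity element. -/

import Mathlib

/-- The "progression word" `x y^(s+1) x y^(s+2) ⋯ x y^(s+r)` in a group. -/
def wordProg {G : Type*} [Group G] (x y : G) (s r : ℕ) : G :=
  ((List.range r).map (fun k => x * y ^ (s + k + 1))).prod

/-- Generators of `G_cd`: `0 = c₁`, `1 = c₂`, `2 = d₁`, `3 = d₂`.
The relators are `cᵢ⁻¹ d_j cᵢ D_{ij}⁻¹` for `1 ≤ i,j ≤ 2`, where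
`D_{ij} = (d₁d₂^{r(2i+j)+1})(d₁d₂^{r(2i+j)+2})⋯(d₁d₂^{r(2i+j)+r})`. -/
def cdRels (r : ℕ) : Set (FreeGroup (Fin 4)) :=
  { w | ∃ i j : Fin 2,
      w = (FreeGroup.of (⟨i.val, by omega⟩ : Fin 4))⁻¹ *
          FreeGroup.of (⟨j.val + 2, by omega⟩ : Fin 4) *
          FreeGroup.of (⟨i.val, by omega⟩ : Fin 4) *
          (wordProg (FreeGroup.of (2 : Fin 4)) (FreeGroup.of (3 : Fin 4))
            (r * (2 * (i.val + 1) + (j.val + 1))) r)⁻¹ }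

/-- `G_cd = ⟨c₁,c₂,d₁,d₂ ∣ cᵢ⁻¹d_jcᵢ = D_{ij}, 1 ≤ i,j ≤ 2⟩`. -/
abbrev Gcd (r : ℕ) := PresentedGroup (cdRels r)

/-- Generators of `G_bcd`: `0 = b`, `1 = c₁`, `2 = c₂`, `3 = d₁`, `4 = d₂`.
The relators are `b⁻¹ cᵢ b Cᵢ⁻¹` and `cᵢ⁻¹ d_j cᵢ D_{ij}⁻¹` for `1 ≤ i,j ≤ 2`,
where `Cᵢ = (c₁c₂^{ri+1})⋯(c₁c₂^{ri+r})` and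
`D_{ij} = (d₁d₂^{r(2i+j)+1})⋯(d₁d₂^{r(2i+j)+r})`. -/
def bcdRels (r : ℕ) : Set (FreeGroup (Fin 5)) :=
  { w | (∃ i : Fin 2,
          w = (FreeGroup.of (0 : Fin 5))⁻¹ *
              FreeGroup.of (⟨i.val + 1, by omega⟩ : Fin 5) *
              FreeGroup.of (0 : Fin 5) *
              (wordProg (FreeGroup.of (1 : Fin 5)) (FreeGroup.of (2 : Fin 5))
                (r * (i.val + 1)) r)⁻¹) ∨
        (∃ i j : Fin 2,
          w = (FreeGroup.of (⟨i.val + 1, by omega⟩ : Fin 5))⁻¹ *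
              FreeGroup.of (⟨j.val + 3, by omega⟩ : Fin 5) *
              FreeGroup.of (⟨i.val + 1, by omega⟩ : Fin 5) *
              (wordProg (FreeGroup.of (3 : Fin 5)) (FreeGroup.of (4 : Fin 5))
                (r * (2 * (i.val + 1) + (j.val + 1))) r)⁻¹) }

/-- `G_bcd = ⟨b,c₁,c₂,d₁,d₂ ∣ b⁻¹cᵢb = Cᵢ, cᵢ⁻¹d_jcᵢ = D_{ij}, 1 ≤ i,j ≤ 2⟩`. -/
abbrev Gbcd (r : ℕ) := PresentedGroup (bcdRels r)

/-!
`G_bcd` is the HNN extension of `G_cd` whose stable letter `b` conjugates `⟨c₁, c₂⟩` onto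
`⟨C₁, C₂⟩` via `cᵢ ↦ Cᵢ`. This makes sense because both subgroups are free on the displayed
generators: killing `d₁, d₂` retracts `G_cd` onto the free group on `c₁, c₂`, and inside that free
group `C₁, C₂` form a basis when `r = 1` and play ping-pong on reduced words when `r ≥ 2`.
A group embeds in its HNN extensions, and the extension receives a map from `G_bcd` extending the
embedding, so `G_cd → G_bcd` is injective. The map `G_bcd → ℤ` with `b ↦ 1` and `G_cd ↦ 0` gives
the statements about `b`.
-/

universe u

theorem wordProg_succ {G : Type*} [Group G] (x y : G) (s r : ℕ) :
    wordProg x y s (r + 1) = wordProg x y s r * (x * y ^ (s + r + 1)) := by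
  simp [wordProg, List.range_succ]

theorem map_wordProg {G H : Type*} [Group G] [Group H] (f : G →* H) (x y : G) (s r : ℕ) :
    f (wordProg x y s r) = wordProg (f x) (f y) s r := by
  simp [wordProg, map_list_prod, Function.comp_def]

theorem wordProg_one_one {G : Type*} [Group G] (s r : ℕ) : wordProg (1 : G) 1 s r = 1 := by
  simp [wordProg]

namespace FreeGroup

open List

variable {α : Type u}

section

variable [DecidableEq α]

theorem IsReduced.toWord_mk {L : List (α × Bool)} (h : IsReduced L) : (mk L).toWord = L := by
  rw [FreeGroup.toWord_mk, h.reduce_eq]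

theorem IsReduced.invRev {L : List (α × Bool)} (h : IsReduced L) : IsReduced (invRev L) := by
  rw [← h.toWord_mk, ← toWord_inv]
  exact isReduced_toWord

def cylinder (L : List (α × Bool)) : Set (FreeGroup α) := {g | L <+: g.toWord}

theorem disjoint_cylinder_append_cons {L L₁ L₂ : List (α × Bool)} {a b : α × Bool}
    (hab : a ≠ b) : Disjoint (cylinder (L ++ a :: L₁)) (cylinder (L ++ b :: L₂)) := by
  refine Set.disjoint_left.2 fun g h₁ h₂ => ?_
  rcases prefix_or_prefix_of_prefix h₁ h₂ with h | h <;>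
    simp only [prefix_append_right_inj, cons_prefix_cons] at h
  exacts [hab h.1, hab h.1.symm]

theorem disjoint_cylinder_replicate_append_cons {L L₁ L₂ : List (α × Bool)} {a b z : α × Bool}
    {m n : ℕ} (hmn : m ≠ n) (ha : a ≠ z) (hb : b ≠ z) :
    Disjoint (cylinder (L ++ replicate m z ++ a :: L₁))
      (cylinder (L ++ replicate n z ++ b :: L₂)) := by
  wlog h : m < n generalizing m n a b L₁ L₂
  · exact (this hmn.symm hb ha (by omega)).symm
  obtain ⟨k, rfl⟩ := Nat.exists_eq_add_of_lt h
  have := disjoint_cylinder_append_cons (L := L ++ replicate m z) (L₁ := L₁)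
    (L₂ := replicate k z ++ b :: L₂) ha
  rwa [add_assoc, replicate_add, replicate_succ, ← append_assoc, append_assoc (L ++ _),
    cons_append]

theorem prefix_toWord_mul {u g : FreeGroup α} {P S : List (α × Bool)} {a : α × Bool}
    (hu : u.toWord = P ++ a :: S) (hg : ¬ invRev (a :: S) <+: g.toWord) :
    P ++ [a] <+: (u * g).toWord := by
  have hred : IsReduced (P ++ a :: S) := hu ▸ isReduced_toWord
  set w := mk S * g
  -- `a` cannot cancel against `w`: otherwise `g = S⁻¹ * w` would begin with `(a :: S)⁻¹`
  have hhead : ∀ b ∈ w.toWord.head?, a.1 = b.1 → a.2 = b.2 := by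
    rintro ⟨b₁, b₂⟩ hb rfl
    by_contra hne
    obtain ⟨T, hT⟩ := head?_eq_some_iff.1 hb
    have hinv : invRev (a :: S) = invRev S ++ [(a.1, b₂)] := by
      cases a; cases b₂ <;> simp_all [invRev]
    have hgT : g = mk (invRev (a :: S) ++ T) := by
      rw [hinv, append_assoc, singleton_append, ← hT, ← mul_mk, mk_toWord, ← inv_mk,
        inv_mul_cancel_left]
    have hgred : IsReduced (invRev (a :: S) ++ T) := by
      rw [hinv]
      refine IsReduced.append_overlap ?_ (by rw [singleton_append, ← hT]; exact isReduced_toWord)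
        (cons_ne_nil _ _)
      exact hinv ▸ (hred.infix (suffix_append P _).isInfix).invRev
    exact hg (by rw [hgT, hgred.toWord_mk]; exact prefix_append _ _)
  have huw : u * g = mk (P ++ [a] ++ w.toWord) := by
    rw [← mul_mk, mk_toWord, ← mul_assoc, mul_mk, append_assoc, singleton_append, ← hu,
      mk_toWord]
  have hred' : IsReduced (P ++ [a] ++ w.toWord) :=
    (hred.infix ⟨[], S, by simp⟩).append_overlap (isChain_cons.2 ⟨hhead, isReduced_toWord⟩)
      (cons_ne_nil _ _)
  rw [huw, hred'.toWord_mk]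
  exact prefix_append _ _

theorem injective_lift_of_toWord_eq_append_cons {ι : Type u} [Nontrivial ι]
    {u : ι → FreeGroup α} {P S : ι → List (α × Bool)} {a : ι → α × Bool}
    (hu : ∀ i, (u i).toWord = P i ++ a i :: S i)
    (hX : Pairwise fun i j => Disjoint (cylinder (P i ++ [a i])) (cylinder (P j ++ [a j])))
    (hY : Pairwise fun i j =>
      Disjoint (cylinder (invRev (a i :: S i))) (cylinder (invRev (a j :: S j))))
    (hXY : ∀ i j, Disjoint (cylinder (P i ++ [a i])) (cylinder (invRev (a j :: S j)))) :
    Function.Injective (lift u) := by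
  refine injective_lift_of_ping_pong u (fun i => cylinder (P i ++ [a i]))
    (fun i => cylinder (invRev (a i :: S i))) (fun i => ⟨u i, ?_⟩) hX hY hXY ?_ ?_
  · exact ⟨S i, by simp [hu]⟩
  · rintro i _ ⟨g, hg, rfl⟩
    exact prefix_toWord_mul (hu i) hg
  · rintro i _ ⟨g, hg, rfl⟩
    have hinv : (u i)⁻¹.toWord = invRev (S i) ++ ((a i).1, !(a i).2) :: invRev (P i) := by
      simp [toWord_inv, hu, invRev]
    have hPa : invRev (((a i).1, !(a i).2) :: invRev (P i)) = P i ++ [a i] := by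
      rw [invRev_cons, invRev_invRev]
      simp [invRev]
    simpa [cylinder, invRev] using prefix_toWord_mul hinv (hPa ▸ hg)

end

def progWord (x y : α) (s : ℕ) : ℕ → List (α × Bool)
  | 0 => []
  | k + 1 => progWord x y s k ++ (x, true) :: replicate (s + k + 1) (y, true)

theorem mk_progWord (x y : α) (s r : ℕ) :
    mk (progWord x y s r) = wordProg (of x) (of y) s r := by
  induction r with
  | zero => rfl
  | succ k ih =>
    rw [progWord, ← mul_mk, ih, wordProg_succ, ← singleton_append, ← mul_mk,
      ← flatten_replicate_singleton, ← pow_mk]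
    rfl

theorem isReduced_progWord (x y : α) (s r : ℕ) : IsReduced (progWord x y s r) := by
  have hpos : ∀ p ∈ progWord x y s r, p.2 = true := by
    induction r with
    | zero => simp [progWord]
    | succ k ih =>
      simp only [progWord, mem_append, mem_cons, mem_replicate]
      rintro p (hp | rfl | ⟨-, rfl⟩)
      exacts [ih p hp, rfl, rfl]
  exact (pairwise_of_forall_mem_list (r := fun p q => p.1 = q.1 → p.2 = q.2)
    fun p hp q hq _ => (hpos p hp).trans (hpos q hq).symm).isChain

theorem toWord_wordProg [DecidableEq α] (x y : α) (s r : ℕ) :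
    (wordProg (of x) (of y) s r).toWord = progWord x y s r := by
  rw [← mk_progWord, (isReduced_progWord x y s r).toWord_mk]

theorem progWord_succ_eq_cons (x y : α) (s k : ℕ) :
    progWord x y s (k + 1) =
      (x, true) :: replicate (s + 1) (y, true) ++ progWord x y (s + 1) k := by
  induction k with
  | zero => simp [progWord]
  | succ k ih =>
    rw [progWord, ih, progWord, show s + (k + 1) + 1 = s + 1 + k + 1 by omega]
    simp

theorem invRev_progWord_succ (x y : α) (s k : ℕ) :
    invRev (progWord x y s (k + 1)) =
      replicate (s + k + 1) (y, false) ++ (x, false) :: invRev (progWord x y s k) := by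
  simp [progWord, invRev]

/-- The ping-pong sets of `wordProg (of x) (of y) s r` are the cylinders of `x y^(s+1) x` and of
`y^-(s+r) x⁻¹`; they separate different offsets `s` only when `r ≥ 2`. -/
theorem injective_lift_wordProg [DecidableEq α] {ι : Type u} [Nontrivial ι] {x y : α}
    (hxy : x ≠ y) {s : ι → ℕ} (hs : Function.Injective s) {r : ℕ} (hr : 2 ≤ r) :
    Function.Injective (lift fun i => wordProg (of x) (of y) (s i) r) := by
  obtain ⟨r, rfl⟩ : ∃ k, r = k + 2 := ⟨r - 2, by omega⟩
  have hxyT : ((x, true) : α × Bool) ≠ (y, true) := by simpa using hxy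
  have hxyF : ((x, false) : α × Bool) ≠ (y, false) := by simpa using hxy
  have hY : ∀ i, invRev ((x, true) :: (replicate (s i + 1 + 1) (y, true) ++
      progWord x y (s i + 1 + 1) r)) =
      replicate (s i + 1 + r + 1) (y, false) ++ (x, false) :: invRev (progWord x y (s i + 1) r) :=
    fun i => by rw [← cons_append, ← progWord_succ_eq_cons, invRev_progWord_succ]
  refine injective_lift_of_toWord_eq_append_cons
    (P := fun i => (x, true) :: replicate (s i + 1) (y, true)) (a := fun _ => (x, true))
    (S := fun i => replicate (s i + 1 + 1) (y, true) ++ progWord x y (s i + 1 + 1) r)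
    (fun i => ?_) (fun i j hij => ?_) (fun i j hij => ?_) (fun i j => ?_)
  · rw [toWord_wordProg, progWord_succ_eq_cons, progWord_succ_eq_cons]
    simp
  · exact disjoint_cylinder_replicate_append_cons (L := [(x, true)]) (L₁ := []) (L₂ := [])
      (by simpa using hs.ne hij) hxyT hxyT
  · dsimp only
    rw [hY, hY]
    simpa using disjoint_cylinder_replicate_append_cons (L := [])
      (L₁ := invRev (progWord x y (s i + 1) r)) (L₂ := invRev (progWord x y (s j + 1) r))
      (by have := hs.ne hij; omega : s i + 1 + r + 1 ≠ s j + 1 + r + 1) hxyF hxyF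
  · rw [hY, replicate_succ, cons_append]
    exact disjoint_cylinder_append_cons (L := []) (by simp)

end FreeGroup

theorem injective_lift_wordProg_fin_two {r : ℕ} (hr : 1 ≤ r) :
    Function.Injective (FreeGroup.lift fun i : Fin 2 =>
      wordProg (FreeGroup.of (0 : Fin 2)) (FreeGroup.of 1) (r * (i + 1)) r) := by
  rcases hr.eq_or_lt with rfl | hr₂
  · -- `C₁ = x y²` and `C₂ = x y³` give back `y = C₁⁻¹ C₂` and `x = C₁ (C₂⁻¹ C₁)²`
    let h : FreeGroup (Fin 2) →* FreeGroup (Fin 2) := FreeGroup.lift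
      ![FreeGroup.of 0 * ((FreeGroup.of 1)⁻¹ * FreeGroup.of 0) ^ 2,
        (FreeGroup.of 0)⁻¹ * FreeGroup.of 1]
    refine Function.LeftInverse.injective (g := h)
      (DFunLike.congr_fun (?_ : h.comp _ = MonoidHom.id _))
    ext i
    fin_cases i <;> simp [h, wordProg, pow_succ, mul_assoc]
  · refine FreeGroup.injective_lift_wordProg (by decide) (fun i j hij => ?_) hr₂
    have := Nat.eq_of_mul_eq_mul_left hr hij
    omega

theorem exists_injective_conj_eq {G H : Type u} [Group G] [Group H] {ι κ : H →* G}
    (hι : Function.Injective ι) (hκ : Function.Injective κ) :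
    ∃ (E : Type u) (_ : Group E) (j : G →* E) (t : E),
      Function.Injective j ∧ ∀ h, t⁻¹ * j (ι h) * t = j (κ h) := by
  let φ := (MonoidHom.ofInjective hκ).symm.trans (MonoidHom.ofInjective hι)
  refine ⟨HNNExtension G κ.range ι.range φ, inferInstance, HNNExtension.of, HNNExtension.t,
    HNNExtension.of_injective φ, fun h => ?_⟩
  simpa [φ, MonoidHom.ofInjective_apply] using
    (HNNExtension.equiv_symm_eq_conj (φ := φ) (MonoidHom.ofInjective hι h)).symm

namespace Gcd

def c (r : ℕ) : FreeGroup (Fin 2) →* Gcd r :=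
  FreeGroup.lift fun i => PresentedGroup.of ⟨i, by omega⟩

def killD (r : ℕ) : Gcd r →* FreeGroup (Fin 2) :=
  PresentedGroup.toGroup (f := fun k : Fin 4 => if h : k.val < 2 then FreeGroup.of ⟨k, h⟩ else 1)
    (by rintro _ ⟨i, j, rfl⟩; simp [map_wordProg, wordProg_one_one, Fin.is_le])

theorem killD_comp_c (r : ℕ) : (killD r).comp (c r) = MonoidHom.id _ := by
  ext i
  simp [killD, c, Fin.is_le]

theorem c_injective (r : ℕ) : Function.Injective (c r) :=
  Function.LeftInverse.injective (g := killD r) (DFunLike.congr_fun (killD_comp_c r))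

def cProg (r : ℕ) : FreeGroup (Fin 2) →* Gcd r :=
  (c r).comp (FreeGroup.lift fun i => wordProg (FreeGroup.of 0) (FreeGroup.of 1) (r * (i + 1)) r)

theorem cProg_injective {r : ℕ} (hr : 1 ≤ r) : Function.Injective (cProg r) :=
  (c_injective r).comp (injective_lift_wordProg_fin_two hr)

def toGbcd (r : ℕ) : Gcd r →* Gbcd r :=
  PresentedGroup.toGroup (f := fun k => PresentedGroup.of k.succ) (by
    rintro _ ⟨i, j, rfl⟩
    rw [← PresentedGroup.one_of_mem (Or.inr ⟨i, j, rfl⟩)]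
    simp [map_wordProg]
    rfl)

end Gcd

theorem Gbcd.exists_lift {r : ℕ} {E : Type*} [Group E] (f : Gcd r →* E) (t : E)
    (ht : ∀ i : Fin 2, t⁻¹ * f (PresentedGroup.of ⟨i, by omega⟩) * t =
      f (wordProg (PresentedGroup.of 0) (PresentedGroup.of 1) (r * (i + 1)) r)) :
    ∃ F : Gbcd r →* E, F.comp (Gcd.toGbcd r) = f ∧ F (PresentedGroup.of 0) = t := by
  refine ⟨PresentedGroup.toGroup (f := Fin.cases t fun k => f (PresentedGroup.of k)) ?_, ?_, ?_⟩
  · rintro _ (⟨i, rfl⟩ | ⟨i, j, rfl⟩)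
    · simp only [map_mul, map_inv, map_wordProg, FreeGroup.lift_apply_of]
      exact mul_inv_eq_one.2 ((ht i).trans (map_wordProg _ _ _ _ _))
    · have := congrArg f (PresentedGroup.one_of_mem (⟨i, j, rfl⟩ : _ ∈ cdRels r))
      simp only [map_mul, map_inv, map_wordProg, map_one, FreeGroup.lift_apply_of] at this ⊢
      exact this
  · ext k
    simp [Gcd.toGbcd]
  · simp

section

open Multiplicative Subgroup

variable {G : Type*} [Group G] {b : G} {ψ : G →* Multiplicative ℤ}

theorem map_zpow_eq_ofAdd (hb : ψ b = ofAdd 1) (k : ℤ) : ψ (b ^ k) = ofAdd k := by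
  rw [map_zpow, hb, ← ofAdd_zsmul, smul_eq_mul, mul_one]

theorem not_isOfFinOrder_of_map_eq_ofAdd_one (hb : ψ b = ofAdd 1) : ¬ IsOfFinOrder b :=
  injective_zpow_iff_not_isOfFinOrder.1 fun m n h => by
    simpa [map_zpow_eq_ofAdd hb] using congrArg ψ h

theorem zpowers_inf_eq_bot_of_map_eq_ofAdd_one (hb : ψ b = ofAdd 1) {K : Subgroup G}
    (hK : K ≤ ψ.ker) : zpowers b ⊓ K = ⊥ := by
  refine eq_bot_iff_forall _ |>.2 fun x ⟨hxb, hxK⟩ => ?_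
  obtain ⟨k, rfl⟩ := mem_zpowers_iff.1 hxb
  have hk : ofAdd k = 1 := map_zpow_eq_ofAdd hb k ▸ hK hxK
  rw [ofAdd_eq_one.1 hk, zpow_zero]

end

/-- For every `r ≥ 1` there is a (necessarily unique) homomorphism
`φ : G_cd → G_bcd` that is the identity on the generators `c₁,c₂,d₁,d₂`
(in `G_cd` the letters `0,1,2,3` are `c₁,c₂,d₁,d₂`; in `G_bcd` they are the
letters `1,2,3,4`), and moreover: (a) `φ` is injective; (b) the generator `b`
(letter `0` of `G_bcd`) has infinite order; (c) the cyclic subgroup generated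
by `b` intersects the image of `φ` only in the identity. -/
theorem Gbcd_is_HNN_extension_of_Gcd (r : ℕ) (hr : 1 ≤ r) :
    ∃ φ : Gcd r →* Gbcd r,
      (∀ x : Fin 4, φ (PresentedGroup.of x) =
        PresentedGroup.of (⟨x.val + 1, by omega⟩ : Fin 5)) ∧
      Function.Injective φ ∧
      ¬ IsOfFinOrder (PresentedGroup.of (0 : Fin 5) : Gbcd r) ∧
      Subgroup.zpowers (PresentedGroup.of (0 : Fin 5) : Gbcd r) ⊓ φ.range = ⊥ := by
  obtain ⟨E, _, j, t, hj, ht⟩ :=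
    exists_injective_conj_eq (Gcd.c_injective r) (Gcd.cProg_injective hr)
  obtain ⟨F, hF, -⟩ := Gbcd.exists_lift j t fun i => by
    simpa [Gcd.cProg, Gcd.c, map_wordProg] using ht (FreeGroup.of i)
  obtain ⟨ψ, hψ, hψb⟩ :=
    Gbcd.exists_lift (1 : Gcd r →* Multiplicative ℤ) (Multiplicative.ofAdd 1) fun _ => by simp
  refine ⟨Gcd.toGbcd r, fun x => rfl, ?_, not_isOfFinOrder_of_map_eq_ofAdd_one hψb,
    zpowers_inf_eq_bot_of_map_eq_ofAdd_one hψb ((MonoidHom.range_le_ker_iff _ _).2 hψ)⟩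
  exact Function.Injective.of_comp (f := F) (by rw [← MonoidHom.coe_comp, hF]; exact hj)
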